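/- arXiv:2007.13472 — 2 statements merged into one kernel-verified Lean document; each statement's English description precedes it below -/
import Mathlib

section
/- For every positive integer n, 9·C(n+3,4) + 6·C(n+2,4) + C(n+1,4) = n(n+1)(4n²+12n+11)/6. -/
lemma c2 (m : ℕ) : Nat.choose (m+2) 2 * 2 = (m+1)*(m+2) := by
  induction m with
  | zero => decide
  | succ k ih => rw [Nat.choose_succ_succ (k+2) 1]; simp [Nat.choose_one_right]; ring_nf; ring_nf at ih; omega

lemma c3 (m : ℕ) : Nat.choose (m+3) 3 * 6 = (m+1)*(m+2)*(m+3) := by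
  induction m with
  | zero => decide
  | succ k ih =>
    have := c2 k
    rw [Nat.choose_succ_succ (k+3) 2]
    have h2 : Nat.choose (k+3) 2 * 2 = (k+2)*(k+3) := by
      have := c2 (k+1); convert this using 3 <;> ring
    nlinarith [ih, h2]

lemma c4 (m : ℕ) : Nat.choose (m+4) 4 * 24 = (m+1)*(m+2)*(m+3)*(m+4) := by
  induction m with
  | zero => decide
  | succ k ih =>
    rw [Nat.choose_succ_succ (k+4) 3]
    have h3 : Nat.choose (k+4) 3 * 6 = (k+2)*(k+3)*(k+4) := by
      have := c3 (k+1); convert this using 3 <;> ring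
    nlinarith [ih, h3]

theorem stmt_4 (n : ℕ) (hn : 0 < n) :
    9 * Nat.choose (n+3) 4 + 6 * Nat.choose (n+2) 4 + Nat.choose (n+1) 4 =
    n * (n+1) * (4*n^2 + 12*n + 11) / 6 := by
  obtain ⟨m, rfl⟩ := Nat.exists_eq_add_of_lt hn
  simp only [Nat.zero_add]
  have h1 := c4 m
  have h2 : Nat.choose (m+1+2) 4 * 24 = m*(m+1)*(m+2)*(m+3) := by
    rcases m with _ | k
    · decide
    · have := c4 (k-0); have := c4 k
      have : Nat.choose (k+4) 4 * 24 = (k+1)*(k+2)*(k+3)*(k+4) := c4 k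
      convert this using 3 <;> ring
  have h3 : Nat.choose (m+1+1) 4 * 24 = (m-1)*m*(m+1)*(m+2) := by
    rcases m with _ | k
    · decide
    · rcases k with _ | j
      · decide
      · exact c4 j
  have key : 6 * (9 * Nat.choose (m+1+3) 4 + 6 * Nat.choose (m+1+2) 4 + Nat.choose (m+1+1) 4)
      = (m+1) * (m+1+1) * (4*(m+1)^2 + 12*(m+1) + 11) := by
    have h1' : Nat.choose (m+1+3) 4 * 24 = (m+1)*(m+2)*(m+3)*(m+4) := by
      exact h1
    rcases m with _ | j
    · decide
    · simp only [Nat.succ_sub_one] at h3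
      nlinarith [h1', h2, h3]
  omega
end

section
/- For every positive integer n, C(n+3,4) + 6·C(n+2,4) + 9·C(n+1,4) = n(n+1)(4n²-4n+3)/6. -/
lemma choose4_mul (k : ℕ) : 24 * Nat.choose (k+3) 4 = k*(k+1)*(k+2)*(k+3) := by
  have h := Nat.ascFactorial_eq_factorial_mul_choose' k 4
  have : Nat.ascFactorial k 4 = k*(k+1)*(k+2)*(k+3) := by
    simp [Nat.ascFactorial]; ring
  rw [this, show k+4-1 = k+3 from rfl, show Nat.factorial 4 = 24 from rfl] at h
  exact h.symm

theorem stmt_5 (n : ℕ) (hn : 0 < n) :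
    Nat.choose (n+3) 4 + 6 * Nat.choose (n+2) 4 + 9 * Nat.choose (n+1) 4 =
    n * (n+1) * (4*n^2 - 4*n + 3) / 6 := by
  obtain ⟨m, rfl⟩ := Nat.exists_eq_add_of_lt hn
  rw [Nat.zero_add]
  rcases m with _ | k
  · decide
  · have h1 := choose4_mul (k+2)
    have h2 := choose4_mul (k+1)
    have h3 := choose4_mul k
    have e1 : k+2+3 = k+1+1+3 := by ring
    have e2 : k+1+3 = k+1+1+2 := by ring
    have e3 : k+3 = k+1+1+1 := by ring
    rw [e1] at h1; rw [e2] at h2; rw [e3] at h3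
    have hsub : 4*(k+2)^2 - 4*(k+2) + 3 = 4*k^2+12*k+11 := by
      have hs : (k+2)^2 = k^2+4*k+4 := by ring
      omega
    have hn2 : (k+1+1) = k+2 := rfl
    rw [hn2, hsub]
    symm
    apply Nat.div_eq_of_eq_mul_left (by norm_num)
    have key : 4 * ((k+2) * (k+2+1) * (4*k^2+12*k+11)) =
        4 * ((Nat.choose (k+1+1+3) 4 + 6 * Nat.choose (k+1+1+2) 4 +
          9 * Nat.choose (k+1+1+1) 4) * 6) := by
      have : 4 * ((Nat.choose (k+1+1+3) 4 + 6 * Nat.choose (k+1+1+2) 4 +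
          9 * Nat.choose (k+1+1+1) 4) * 6) =
          (24 * Nat.choose (k+1+1+3) 4) + 6 * (24 * Nat.choose (k+1+1+2) 4) +
          9 * (24 * Nat.choose (k+1+1+1) 4) := by ring
      rw [this, h1, h2, h3]; ring
    exact Nat.eq_of_mul_eq_mul_left (by norm_num) key
end
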